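/- arXiv:2212.07140 — 5 statements merged into one kernel-verified Lean document; each statement's English description precedes it below -/
import Mathlib

section
/- Let Γ be a finite simple graph with GF(2) edge weights ω. The subdivided graph Γ̃ (obtained by subdividing exactly the edges of weight 1) is bipartite if and only if every cycle c₁,...,c_ℓ in Γ satisfies Σᵢ ω(cᵢ) ≡ ℓ (mod 2). -/
/-- The graph obtained from `G` by subdividing every edge of `ω`-weight `1`
(replacing it by a path of length two through a fresh vertex indexed by the edge),
and keeping edges of weight `0` unchanged. -/
def subdiv {V : Type*} (G : SimpleGraph V) (ω : V → V → ZMod 2) :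
    SimpleGraph (V ⊕ Sym2 V) :=
  SimpleGraph.fromRel (fun a b =>
    match a, b with
    | Sum.inl u, Sum.inl v => G.Adj u v ∧ ω u v = 0
    | Sum.inl u, Sum.inr e => ∃ v, G.Adj u v ∧ ω u v = 1 ∧ e = s(u, v)
    | _, _ => False)

/-
Give each dart of `G` the weight `1 + ω`, its length mod 2 in the subdivision. A 2-colouring of
the subdivision restricts to a potential `φ : V → ZMod 2` whose increments along darts are these
weights, and every such potential extends to a colouring. A potential exists iff every closed walk
has weight zero. Finally closed walks may be replaced by cycles: `bypass` only ever removes an edge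
followed by a path back to its start, which is a cycle or a backtrack, so it preserves the weight,
and it shrinks a closed walk to the empty one.
-/

namespace SimpleGraph

variable {V A : Type*} [AddCommGroup A] {G : SimpleGraph V}

namespace Walk

theorem sum_darts_map_sub (φ : V → A) {u v : V} (p : G.Walk u v) :
    (p.darts.map fun d => φ d.snd - φ d.fst).sum = φ v - φ u := by
  induction p with
  | nil => simp
  | cons h p ih => simp only [darts_cons, List.map_cons, List.sum_cons, ih]; abel

variable {f : G.Dart → A}

theorem sum_darts_reverse (hf : ∀ d, f d.symm = -f d) {u v : V} (p : G.Walk u v) :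
    (p.reverse.darts.map f).sum = -(p.darts.map f).sum := by
  simp [darts_reverse, List.sum_neg, Function.comp_def, hf]

theorem sum_darts_cons_eq_zero_of_isPath (hf : ∀ d, f d.symm = -f d)
    (hcyc : ∀ v (c : G.Walk v v), c.IsCycle → (c.darts.map f).sum = 0) {u v : V}
    {p : G.Walk v u} (hp : p.IsPath) (h : G.Adj u v) : ((cons h p).darts.map f).sum = 0 := by
  by_cases he : s(u, v) ∈ p.edges
  · rw [hp.eq_adj_toWalk_of_mem_edges (Sym2.eq_swap ▸ he)]
    simpa using add_eq_zero_iff_eq_neg'.2 (hf ⟨(u, v), h⟩)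
  · exact hcyc _ _ ((cons_isCycle_iff p h).2 ⟨hp, he⟩)

theorem sum_darts_bypass [DecidableEq V] (hf : ∀ d, f d.symm = -f d)
    (hcyc : ∀ v (c : G.Walk v v), c.IsCycle → (c.darts.map f).sum = 0) {u v : V}
    (p : G.Walk u v) : (p.bypass.darts.map f).sum = (p.darts.map f).sum := by
  induction p with
  | nil => rfl
  | cons h p ih =>
    simp only [bypass]
    split_ifs with hs
    · have hsplit := congrArg (fun q => (q.darts.map f).sum) (p.bypass.take_spec hs)
      have hloop := sum_darts_cons_eq_zero_of_isPath hf hcyc ((bypass_isPath p).takeUntil hs) h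
      simp only [darts_append, darts_cons, List.map_append, List.map_cons, List.sum_append,
        List.sum_cons] at hsplit hloop ⊢
      rw [← ih, ← hsplit, ← add_assoc, hloop, zero_add]
    · simp only [darts_cons, List.map_cons, List.sum_cons, ih]

theorem sum_darts_loop_eq_zero (hf : ∀ d, f d.symm = -f d)
    (hcyc : ∀ v (c : G.Walk v v), c.IsCycle → (c.darts.map f).sum = 0) {v : V}
    (p : G.Walk v v) : (p.darts.map f).sum = 0 := by
  classical
  rw [← sum_darts_bypass hf hcyc, (isPath_iff_nil.1 (bypass_isPath p)).eq_nil]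
  rfl

end Walk

theorem exists_potential_iff_forall_loop_sum_eq_zero {f : G.Dart → A}
    (hf : ∀ d, f d.symm = -f d) :
    (∃ φ : V → A, ∀ d : G.Dart, f d = φ d.snd - φ d.fst) ↔
      ∀ v (p : G.Walk v v), (p.darts.map f).sum = 0 := by
  constructor
  · rintro ⟨φ, hφ⟩ v p
    obtain rfl : f = fun d => φ d.snd - φ d.fst := funext hφ
    rw [Walk.sum_darts_map_sub, sub_self]
  intro h
  have sum_eq : ∀ {a b : V} (p q : G.Walk a b), (p.darts.map f).sum = (q.darts.map f).sum := by
    intro a b p q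
    have := h _ (p.append q.reverse)
    rwa [Walk.darts_append, List.map_append, List.sum_append, Walk.sum_darts_reverse hf,
      ← sub_eq_add_neg, sub_eq_zero] at this
  have reach (v : V) : G.Reachable (G.connectedComponentMk v).out v :=
    ConnectedComponent.exact (Quot.out_eq _)
  refine ⟨fun v => ((reach v).some.darts.map f).sum, fun d => ?_⟩
  suffices ∀ {b b' : V} (p : G.Walk b d.fst) (q : G.Walk b' d.snd), b = b' →
      (q.darts.map f).sum = (p.darts.map f).sum + f d from
    eq_sub_of_add_eq' (this _ _ (congrArg Quot.out (ConnectedComponent.sound d.adj.reachable))).symm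
  rintro b _ p q rfl
  rw [sum_eq q (p.concat d.adj), Walk.darts_concat, List.concat_eq_append, List.map_append,
    List.sum_append, List.map_singleton, List.sum_singleton]

theorem forall_loop_sum_eq_zero_iff_forall_isCycle {f : G.Dart → A}
    (hf : ∀ d, f d.symm = -f d) :
    (∀ v (p : G.Walk v v), (p.darts.map f).sum = 0) ↔
      ∀ v (p : G.Walk v v), p.IsCycle → (p.darts.map f).sum = 0 :=
  ⟨fun h v p _ => h v p, fun h _ p => Walk.sum_darts_loop_eq_zero hf h p⟩

theorem colorable_two_iff_nonempty_coloring_zmod :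
    G.Colorable 2 ↔ Nonempty (G.Coloring (ZMod 2)) :=
  (G.recolorOfEquiv (ZMod.finEquiv 2).toEquiv).nonempty_congr

end SimpleGraph

open SimpleGraph

section Subdiv

variable {V : Type*} {G : SimpleGraph V} {ω : V → V → ZMod 2}

theorem subdiv_adj_inl_inl {u v : V} (h : G.Adj u v) (h0 : ω u v = 0) :
    (subdiv G ω).Adj (.inl u) (.inl v) :=
  (fromRel_adj _ _ _).2 ⟨by simp [h.ne], .inl ⟨h, h0⟩⟩

theorem subdiv_adj_inl_inr {u v : V} (h : G.Adj u v) (h1 : ω u v = 1) :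
    (subdiv G ω).Adj (.inl u) (.inr s(u, v)) :=
  (fromRel_adj _ _ _).2 ⟨Sum.inl_ne_inr, .inl ⟨v, h, h1, rfl⟩⟩

theorem exists_potential_of_coloring_subdiv (hω : ∀ i j, ω i j = ω j i)
    (C : (subdiv G ω).Coloring (ZMod 2)) :
    ∃ φ : V → ZMod 2, ∀ d : G.Dart, 1 + ω d.fst d.snd = φ d.snd - φ d.fst := by
  refine ⟨fun v => C (.inl v), fun ⟨(u, v), h⟩ => ?_⟩
  obtain h0 | h1 : ω u v = 0 ∨ ω u v = 1 := by generalize ω u v = a; decide +revert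
  · have huv := C.valid (subdiv_adj_inl_inl h h0)
    dsimp only
    rw [h0]
    generalize C (.inl u) = a, C (.inl v) = b at huv ⊢
    decide +revert
  · have hu := C.valid (subdiv_adj_inl_inr h h1)
    have hv := C.valid (subdiv_adj_inl_inr h.symm ((hω v u).trans h1))
    rw [Sym2.eq_swap] at hv
    dsimp only
    rw [h1]
    generalize C (.inl u) = a, C (.inl v) = b, C (.inr s(u, v)) = c at hu hv ⊢
    decide +revert

/-- A subdivision vertex `e` is coloured opposite to its endpoints, which share a colour, so the
endpoint `e.out.1` may stand for either. -/
noncomputable def coloringSubdivOfPotential (φ : V → ZMod 2)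
    (hφ : ∀ d : G.Dart, 1 + ω d.fst d.snd = φ d.snd - φ d.fst) :
    (subdiv G ω).Coloring (ZMod 2) :=
  Coloring.mk (Sum.elim φ fun e => 1 + φ e.out.1) <| by
    have weight_zero {u v : V} (h : G.Adj u v) (h0 : ω u v = 0) : φ u ≠ φ v := by
      have := hφ ⟨(u, v), h⟩
      dsimp only at this
      rw [h0] at this
      generalize φ u = a, φ v = b at this ⊢
      decide +revert
    have weight_one {u v : V} (h : G.Adj u v) (h1 : ω u v = 1) :
        φ u ≠ 1 + φ s(u, v).out.1 := by
      have hv : φ v = φ u := sub_eq_zero.1 <| (hφ ⟨(u, v), h⟩).symm.trans <| by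
        rw [show ω u v = 1 from h1]; rfl
      rcases Sym2.mem_iff.1 s(u, v).out_fst_mem with he | he <;> rw [he]
      all_goals simp [hv]
    rintro (u | e) (v | e') hadj <;> rw [subdiv, fromRel_adj] at hadj <;>
      simp only [or_false, false_or, Sum.elim_inl, Sum.elim_inr] at hadj ⊢
    · rcases hadj.2 with ⟨h, h0⟩ | ⟨h, h0⟩
      exacts [weight_zero h h0, (weight_zero h h0).symm]
    · obtain ⟨v, h, h1, rfl⟩ := hadj.2
      exact weight_one h h1
    · obtain ⟨u, h, h1, rfl⟩ := hadj.2
      exact (weight_one h h1).symm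
    · exact hadj.2.elim

theorem colorable_two_subdiv_iff (hω : ∀ i j, ω i j = ω j i) :
    (subdiv G ω).Colorable 2 ↔
      ∃ φ : V → ZMod 2, ∀ d : G.Dart, 1 + ω d.fst d.snd = φ d.snd - φ d.fst := by
  rw [colorable_two_iff_nonempty_coloring_zmod]
  exact ⟨fun ⟨C⟩ => exists_potential_of_coloring_subdiv hω C,
    fun ⟨φ, hφ⟩ => ⟨coloringSubdivOfPotential φ hφ⟩⟩

end Subdiv

theorem subdiv_bipartite_iff_cycle_parity {n : ℕ} (G : SimpleGraph (Fin n))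
    (ω : Fin n → Fin n → ZMod 2) (hω : ∀ i j, ω i j = ω j i) :
    (subdiv G ω).Colorable 2 ↔
    (∀ (v : Fin n) (p : G.Walk v v), p.IsCycle →
        (p.darts.map (fun d => ω d.fst d.snd)).sum = (p.length : ZMod 2)) := by
  have hf (d : G.Dart) : 1 + ω d.symm.fst d.symm.snd = -(1 + ω d.fst d.snd) := by
    rw [CharTwo.neg_eq, Dart.symm_toProd, Prod.fst_swap, Prod.snd_swap, hω]
  rw [colorable_two_subdiv_iff hω, exists_potential_iff_forall_loop_sum_eq_zero hf,
    forall_loop_sum_eq_zero_iff_forall_isCycle hf]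
  refine forall₂_congr fun v p => imp_congr_right fun _ => ?_
  rw [List.sum_map_add, List.map_const', List.sum_replicate, nsmul_one, Walk.length_darts,
    CharTwo.add_eq_zero, eq_comm]
end

section
/- The 6×6 symmetric matrix M over GF(2) given by rows m₁=(0,0,1,1,1,1), m₂=(0,0,1,1,1,0), m₃=(1,1,0,1,1,1), m₄=(1,1,0,0,1,1), m₅=(1,1,1,1,0,0), m₆=(1,1,1,1,0,0) (interpreted as the interlacement matrix of the Gauss code 123451632654) admits no diagonal matrix D over GF(2) with (M+D)² = M+D; equivalently, the system m_{i,j}Xᵢ + m_{i,j}Xⱼ = ⟨mᵢ,mⱼ⟩ + m_{i,j} has no GF(2) solution. -/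
/-! Both conditions already fail on the diagonal at the second index. The second row of `M` has
weight 3 while `M 1 1 = 0`, so the equation of the system for `i = j = 1` reads `0 = 1`; and the
`(1, 1)` entry of `(M + D)²` is `(M * M) 1 1 + d² = 1 + d`, which never equals `(M + D) 1 1 = d`. -/

namespace Matrix

variable {n R : Type*} [Fintype n] [DecidableEq n]

theorem mul_self_add_diagonal_apply_self [Semiring R] {A : Matrix n n R} (d : n → R) {i : n}
    (hA : A i i = 0) :
    ((A + diagonal d) * (A + diagonal d)) i i = (A * A) i i + d i * d i := by
  simp only [add_mul, mul_add, add_apply, mul_diagonal, diagonal_mul, diagonal_mul_diagonal,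
    diagonal_apply_eq, hA, zero_mul, mul_zero, add_zero, zero_add]

theorem mul_self_apply_self_eq_zero_of_isIdempotentElem {A : Matrix n n (ZMod 2)} {d : n → ZMod 2}
    {i : n} (hA : A i i = 0) (h : IsIdempotentElem (A + diagonal d)) : (A * A) i i = 0 := by
  have hd : d i * d i = d i := by rw [← sq, ZMod.pow_card]
  have hii := congr_fun (congr_fun h i) i
  rw [mul_self_add_diagonal_apply_self d hA, hd, add_apply, hA, zero_add,
    diagonal_apply_eq] at hii
  exact add_eq_right.mp hii

end Matrix

open Matrix in
theorem counterexample_code_123451632654_not_realizable :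
    let M : Matrix (Fin 6) (Fin 6) (ZMod 2) :=
      !![0,0,1,1,1,1;
         0,0,1,1,1,0;
         1,1,0,1,1,1;
         1,1,0,0,1,1;
         1,1,1,1,0,0;
         1,1,1,1,0,0]
    (¬ ∃ D : Matrix (Fin 6) (Fin 6) (ZMod 2), (∀ i j, i ≠ j → D i j = 0) ∧
        (M + D) * (M + D) = M + D) ∧
    (¬ ∃ X : Fin 6 → ZMod 2, ∀ i j,
        M i j * X i + M i j * X j = (∑ k, M i k * M j k) + M i j) := by
  intro M
  have hM : M 1 1 = 0 := rfl
  constructor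
  · rintro ⟨D, hD, hidem⟩
    rw [← (isDiag_iff_diagonal_diag D).mp hD] at hidem
    have hMM : (M * M) 1 1 = 1 := by decide
    simpa [hMM] using mul_self_apply_self_eq_zero_of_isIdempotentElem hM hidem
  · rintro ⟨X, hX⟩
    have hweight : ∑ k, M 1 k * M 1 k = 1 := by decide
    simpa [hM, hweight] using hX 1 1
end

section
/- Let M be a symmetric n×n matrix over GF(2) with zero diagonal. If M² = 0 and the graph with adjacency matrix M contains a triangle (vertices i,j,k pairwise adjacent), then there is no diagonal matrix D over GF(2) with (M+D)² = M+D. -/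
/-!
Write `D = diagonal d`. Expanding `(M + D)² = M + D` with `M² = 0` and `D² = D` leaves
`D M + M D = M`, whose `(a, b)` entry reads `(d a + d b) M a b = M a b`. So over `GF(2)` every
edge `ab` of the graph of `M` forces `d a + d b = 1`, i.e. `d` is a proper 2-colouring,
which cannot exist on a triangle.
-/

open Matrix

theorem mul_add_mul_eq_self_of_isIdempotentElem_add {R : Type*} [NonUnitalRing R] {m e : R}
    (hm : m * m = 0) (he : IsIdempotentElem e) (h : IsIdempotentElem (m + e)) :
    e * m + m * e = m := by
  have expand : (m + e) * (m + e) = e * m + m * e + e := by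
    rw [add_mul, mul_add, mul_add, hm, he.eq]; abel
  have := h.eq
  rw [expand] at this
  exact add_right_cancel this

theorem Matrix.isIdempotentElem_diagonal {ι R : Type*} [Fintype ι] [DecidableEq ι]
    [NonUnitalNonAssocSemiring R] {d : ι → R} (hd : IsIdempotentElem d) :
    IsIdempotentElem (diagonal d) := by
  rw [IsIdempotentElem, diagonal_mul_diagonal, ← Pi.mul_def, hd.eq]

theorem ZMod.isIdempotentElem_two (x : ZMod 2) : IsIdempotentElem x := by
  fin_cases x <;> rfl

theorem ZMod.add_eq_zero_of_add_eq_one_of_add_eq_one {x y z : ZMod 2}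
    (hxy : x + y = 1) (hyz : y + z = 1) : x + z = 0 := by
  revert x y z; decide

theorem no_D_of_sq_zero_and_triangle_general {n : ℕ} (M : Matrix (Fin n) (Fin n) (ZMod 2))
    (hsq : M * M = 0)
    (i j k : Fin n)
    (eij : M i j = 1) (ejk : M j k = 1) (eik : M i k = 1) :
    ¬ ∃ D : Matrix (Fin n) (Fin n) (ZMod 2), (∀ a b, a ≠ b → D a b = 0) ∧
        (M + D) * (M + D) = M + D := by
  rintro ⟨D, hD, hidem⟩
  set d := D.diag
  rw [← IsDiag.diagonal_diag (A := D) hD] at hidem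
  have hdiag : IsIdempotentElem (diagonal d) :=
    isIdempotentElem_diagonal (funext fun a => ZMod.isIdempotentElem_two (d a))
  have hDM : diagonal d * M + M * diagonal d = M :=
    mul_add_mul_eq_self_of_isIdempotentElem_add hsq hdiag hidem
  have edge (a b : Fin n) (hab : M a b = 1) : d a + d b = 1 := by
    simpa [hab] using congrFun (congrFun hDM a) b
  have hik := ZMod.add_eq_zero_of_add_eq_one_of_add_eq_one (edge i j eij) (edge j k ejk)
  rw [edge i k eik] at hik
  exact one_ne_zero hik

theorem no_D_of_sq_zero_and_triangle {n : ℕ} (M : Matrix (Fin n) (Fin n) (ZMod 2))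
    (hsymm : M.transpose = M) (hdiag : ∀ i, M i i = 0)
    (hsq : M * M = 0)
    (i j k : Fin n) (hij : i ≠ j) (hjk : j ≠ k) (hik : i ≠ k)
    (eij : M i j = 1) (ejk : M j k = 1) (eik : M i k = 1) :
    ¬ ∃ D : Matrix (Fin n) (Fin n) (ZMod 2), (∀ a b, a ≠ b → D a b = 0) ∧
        (M + D) * (M + D) = M + D :=
  no_D_of_sq_zero_and_triangle_general M hsq i j k eij ejk eik
end

section
/- Let M be a symmetric n×n matrix over GF(2) with zero diagonal. Suppose M² = 0. Then a diagonal matrix D with (M+D)² = M+D exists if and only if the graph with adjacency matrix M is bipartite. -/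
/-! For diagonal `D = diagonal d` and `M * M = 0`, the square `(M + D)²` is
`M * D + D * M + D²`, with `(i, j)` entry `M i j * (d i + d j) + δᵢⱼ d i²`. Over `ZMod 2`,
where `d i² = d i`, idempotence of `M + D` therefore says `M i j * (d i + d j) = M i j`, i.e. the
two ends of every edge of the graph of `M` get different values of `d`: `d` is a proper
2-colouring. -/

open Matrix

namespace Matrix

variable {ι R : Type*} [DecidableEq ι]

theorem exists_diagonal_eq_iff [Zero R] (D : Matrix ι ι R) :
    (∃ d, diagonal d = D) ↔ ∀ a b, a ≠ b → D a b = 0 :=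
  ⟨by rintro ⟨d, rfl⟩; exact isDiag_diagonal d, fun h => ⟨D.diag, (isDiag_iff_diagonal_diag D).1 h⟩⟩

variable [Fintype ι]

theorem add_diagonal_mul_self_of_mul_self_eq_zero [NonUnitalNonAssocSemiring R]
    {M : Matrix ι ι R} (hM : M * M = 0) (d : ι → R) :
    (M + diagonal d) * (M + diagonal d) = M * diagonal d + diagonal d * M + diagonal (d * d) := by
  rw [add_mul, mul_add, mul_add, hM, zero_add, diagonal_mul_diagonal, ← add_assoc]
  rfl

theorem add_diagonal_mul_self_eq_self_iff [CommRing R] {M : Matrix ι ι R} (hM : M * M = 0)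
    {d : ι → R} (hd : ∀ i, d i * d i = d i) :
    (M + diagonal d) * (M + diagonal d) = M + diagonal d ↔
      ∀ i j, M i j * (d i + d j) = M i j := by
  rw [add_diagonal_mul_self_of_mul_self_eq_zero hM, ← Matrix.ext_iff]
  refine forall₂_congr fun i j => ?_
  have hdiag : diagonal (d * d) i j = diagonal d i j := by
    rcases eq_or_ne i j with rfl | hij
    · simp only [diagonal_apply_eq, Pi.mul_apply, hd]
    · simp only [diagonal_apply_ne _ hij]
  simp only [add_apply, mul_diagonal, diagonal_mul, hdiag, add_left_inj]
  ring_nf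

end Matrix

theorem ZMod.mul_add_eq_self_iff (x y z : ZMod 2) : x * (y + z) = x ↔ (x = 1 → y ≠ z) := by
  decide +revert

theorem SimpleGraph.colorable_two_iff_exists_zmod_two {V : Type*} (G : SimpleGraph V) :
    G.Colorable 2 ↔ ∃ c : V → ZMod 2, ∀ i j, G.Adj i j → c i ≠ c j :=
  ⟨fun ⟨C⟩ => ⟨C, fun _ _ => C.valid⟩, fun ⟨c, hc⟩ => ⟨Coloring.mk c fun h => hc _ _ h⟩⟩

theorem stz_iff_bipartite_of_sq_zero_general {n : ℕ} (M : Matrix (Fin n) (Fin n) (ZMod 2))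
    (hsq : M * M = 0)
    (G : SimpleGraph (Fin n)) (hadj : ∀ i j, G.Adj i j ↔ M i j = 1) :
    (∃ D : Matrix (Fin n) (Fin n) (ZMod 2), (∀ a b, a ≠ b → D a b = 0) ∧
        (M + D) * (M + D) = M + D) ↔ G.Colorable 2 := by
  simp only [← exists_diagonal_eq_iff, exists_exists_eq_and]
  rw [G.colorable_two_iff_exists_zmod_two]
  refine exists_congr fun d => ?_
  rw [add_diagonal_mul_self_eq_self_iff hsq fun i => by rw [← sq, ZMod.pow_card]]
  simp only [ZMod.mul_add_eq_self_iff, hadj]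

theorem stz_iff_bipartite_of_sq_zero {n : ℕ} (M : Matrix (Fin n) (Fin n) (ZMod 2))
    (hsymm : M.transpose = M) (hdiag : ∀ i, M i i = 0)
    (hsq : M * M = 0)
    (G : SimpleGraph (Fin n)) (hadj : ∀ i j, G.Adj i j ↔ M i j = 1) :
    (∃ D : Matrix (Fin n) (Fin n) (ZMod 2), (∀ a b, a ≠ b → D a b = 0) ∧
        (M + D) * (M + D) = M + D) ↔ G.Colorable 2 :=
  stz_iff_bipartite_of_sq_zero_general M hsq G hadj
end

section
/- The 9×9 symmetric matrix M over GF(2) which is the adjacency matrix of the interlacement graph of the Gauss code 078435687216504312 (chords 0–8, with chord pairs interlaced as determined by this double occurrence word) satisfies: every row has an even number of ones, and ⟨mᵢ,mⱼ⟩ = 0 whenever m_{i,j} = 0, and for every triple of pairwise adjacent vertices i,j,k: ⟨mᵢ,mⱼ⟩ + ⟨mᵢ,m_k⟩ + ⟨mⱼ,m_k⟩ = 1 in GF(2); yet there is no diagonal matrix D over GF(2) with (M+D)² = M+D. -/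
/-!
Over a ring of characteristic 2, the `(i, j)` entry of `(M + diagonal d)² = M + diagonal d` at an
edge `i ≠ j` of a zero-diagonal `M` reads `dᵢ + dⱼ = 1 + (M²)ᵢⱼ`. Summed around a closed walk the
left sides cancel, so a suitable `d` exists only if `1 + (M²)ᵢⱼ` has even sum around every cycle.
For a symmetric `M`, conditions (1) and (2) are the remaining entries of the equation and (3) says
that every triangle has even sum; for the nine-chord matrix the 4-cycle `1 3 7 5` has odd sum.
-/

theorem Fin.sum_add_apply_add_one_eq_zero {R : Type*} [CommRing R] [CharP R 2] {L : ℕ}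
    [NeZero L] (f : Fin L → R) : ∑ t, (f t + f (t + 1)) = 0 := by
  rw [Finset.sum_add_distrib,
    Fintype.sum_equiv (Equiv.addRight 1) (fun t ↦ f (t + 1)) f fun _ ↦ rfl,
    CharTwo.add_self_eq_zero]

namespace Matrix

variable {n R : Type*} [Fintype n] [DecidableEq n] [CommRing R]

theorem mul_self_add_diagonal_apply_of_ne (M : Matrix n n R) (d : n → R) {i j : n}
    (hij : i ≠ j) :
    ((M + diagonal d) * (M + diagonal d)) i j = (M * M) i j + (d i + d j) * M i j := by
  simp only [add_mul, mul_add, add_apply, mul_diagonal, diagonal_mul, diagonal_mul_diagonal,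
    diagonal_apply_ne _ hij, add_zero]
  ring

variable [CharP R 2]

theorem add_eq_one_add_mul_self_apply_of_isIdempotentElem {M : Matrix n n R} {d : n → R}
    (h : IsIdempotentElem (M + diagonal d)) {i j : n} (hij : i ≠ j) (hM : M i j = 1) :
    d i + d j = 1 + (M * M) i j := by
  have hij' := congr_fun₂ h i j
  rw [mul_self_add_diagonal_apply_of_ne M d hij, add_apply, diagonal_apply_ne _ hij, hM,
    mul_one, add_zero] at hij'
  rw [← hij', add_right_comm, CharTwo.add_self_eq_zero, zero_add]

theorem not_isIdempotentElem_add_diagonal_of_cycle (M : Matrix n n R) {L : ℕ} [NeZero L]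
    (v : Fin L → n) (hv : ∀ t, v t ≠ v (t + 1)) (hM : ∀ t, M (v t) (v (t + 1)) = 1)
    (hsum : ∑ t, (1 + (M * M) (v t) (v (t + 1))) ≠ 0) (d : n → R) :
    ¬ IsIdempotentElem (M + diagonal d) := fun h ↦ hsum <| by
  rw [← Fin.sum_add_apply_add_one_eq_zero (d ∘ v)]
  exact Finset.sum_congr rfl fun t _ ↦
    (add_eq_one_add_mul_self_apply_of_isIdempotentElem h (hv t) (hM t)).symm

end Matrix

theorem nine_chord_counterexample :
    let M : Matrix (Fin 9) (Fin 9) (ZMod 2) :=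
      !![0,1,1,1,1,0,0,0,0;
         1,0,1,1,1,1,1,0,0;
         1,1,0,1,1,1,1,0,0;
         1,1,1,0,1,0,0,1,1;
         1,1,1,1,0,0,0,1,1;
         0,1,1,0,0,0,0,1,1;
         0,1,1,0,0,0,0,1,1;
         0,0,0,1,1,1,1,0,0;
         0,0,0,1,1,1,1,0,0]
    (∀ i, (∑ j, M i j) = 0) ∧
    (∀ i j, M i j = 0 → (∑ k, M i k * M j k) = 0) ∧
    (∀ i j k, M i j = 1 → M i k = 1 → M j k = 1 →
        (∑ l, M i l * M j l) + (∑ l, M i l * M k l) + (∑ l, M j l * M k l) = 1) ∧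
    (¬ ∃ D : Matrix (Fin 9) (Fin 9) (ZMod 2), (∀ a b, a ≠ b → D a b = 0) ∧
        (M + D) * (M + D) = M + D) := by
  intro M
  -- Instance search cannot see through `Matrix` to the entries' `DecidableEq` under nested `∀`.
  refine ⟨by decide, by simp only [M, Matrix.of_apply]; decide,
    by simp only [M, Matrix.of_apply]; decide, ?_⟩
  rintro ⟨D, hD, hidem⟩
  rw [← Matrix.IsDiag.diagonal_diag hD] at hidem
  exact M.not_isIdempotentElem_add_diagonal_of_cycle ![1, 3, 7, 5] (by decide) (by decide)
    (by decide) _ hidem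
end
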